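/- arXiv:2209.01609 — 2 statements merged into one kernel-verified Lean document; each statement's English description precedes it below -/
import Mathlib

section
/- Let ρ₀ ∈ (0, π/2), let n ≥ 2 and m be integers with 0 < m < n and gcd(m,n) = 1, and let ρ₁ : ℝ → ℝ be continuous and 2π-periodic. For θ ∈ ℝ set θ_j = θ + 2πmj/n and define M(θ) as the derivative at ε = 0 of ε ↦ ∑_{j=0}^{n-1} arccos( sin(ρ₀+ερ₁(θ_j))·sin(ρ₀+ερ₁(θ_{j+1}))·cos(2πm/n) + cos(ρ₀+ερ₁(θ_j))·cos(ρ₀+ερ₁(θ_{j+1})) ). If there exists k ∈ ℤ with k ≠ 0, n ∣ k, and the k-th Fourier coefficient of ρ₁ nonzero, then M is not constant on ℝ. -/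
/-!
Pushing both ends of a chord of the circle of colatitude `ρ₀` radially outwards at rates `A`, `B`
changes its geodesic length at rate `κ (A + B)` with `κ > 0`, so summing over the closed polygon
gives `M(θ) = 2κ ∑ⱼ ρ₁(θ + 2πmj/n)`. Rotating by `2πmj/n` multiplies the `k`-th Fourier
coefficient by `e^{2πikmj/n} = 1` when `n ∣ k`, so the `k`-th coefficient of that sum is
`n ρ̂₁(k) ≠ 0`; a constant function has no nonzero coefficient at `k ≠ 0`.
-/

open Real

/-- The `k`-th Fourier coefficient (with respect to period `2π`) of a function
`g : ℝ → ℂ`, namely `(1/2π) ∫_0^{2π} g(θ) e^{-ikθ} dθ`. -/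
noncomputable def fourierCoeff2pi (g : ℝ → ℂ) (k : ℤ) : ℂ :=
  (1 / (2 * (Real.pi : ℂ))) *
    ∫ θ in (0 : ℝ)..(2 * Real.pi), g θ * Complex.exp (-Complex.I * (k : ℂ) * (θ : ℂ))

open Finset in
theorem Finset.sum_range_succ_eq_of_eq {M : Type*} [AddCancelCommMonoid M] (f : ℕ → M) {n : ℕ}
    (h : f n = f 0) : ∑ j ∈ range n, f (j + 1) = ∑ j ∈ range n, f j := by
  have h₁ := sum_range_succ' f n
  rw [sum_range_succ, h] at h₁
  exact (add_right_cancel h₁).symm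

theorem cos_two_pi_mul_div_lt_one {m : ℤ} {n : ℕ} (hm : 0 < m) (hmn : m < n) :
    cos (2 * π * m / n) < 1 := by
  have hn : (0 : ℝ) < n := by exact_mod_cast hm.trans hmn
  have hpos : 0 < 2 * π * m / n := by positivity
  have hlt : 2 * π * m / n < 2 * π := by
    rw [div_lt_iff₀ hn]
    have : (m : ℝ) < n := by exact_mod_cast hmn
    nlinarith [pi_pos]
  refine (cos_le_one _).lt_of_ne fun h => hpos.ne' ?_
  exact (cos_eq_one_iff_of_lt_of_lt (by linarith) hlt).1 h

/-- The derivative in `ε` at `ε = 0` of the geodesic distance between two points of the circle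
of colatitude `ρ₀`, at angular separation `δ` with `c = cos δ`, when each is pushed radially at
unit speed. -/
noncomputable def sphericalChordRate (ρ₀ c : ℝ) : ℝ :=
  sin ρ₀ * cos ρ₀ * (1 - c) / √(1 - (sin ρ₀ * sin ρ₀ * c + cos ρ₀ * cos ρ₀) ^ 2)

theorem sin_mul_sin_mul_add_cos_mul_cos_mem_Ioo {ρ₀ c : ℝ} (hρ : ρ₀ ∈ Set.Ioo 0 (π / 2))
    (hc : c ∈ Set.Ico (-1) 1) :
    sin ρ₀ * sin ρ₀ * c + cos ρ₀ * cos ρ₀ ∈ Set.Ioo (-1) 1 := by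
  have hsin : 0 < sin ρ₀ := sin_pos_of_pos_of_lt_pi hρ.1 (by linarith [hρ.2, pi_pos])
  have hcos : 0 < cos ρ₀ := cos_pos_of_mem_Ioo ⟨by linarith [hρ.1, pi_pos], hρ.2⟩
  have hpyth := sin_sq_add_cos_sq ρ₀
  obtain ⟨hc₁, hc₂⟩ := hc
  constructor <;> nlinarith [mul_pos hsin hsin, mul_pos hcos hcos]

theorem sphericalChordRate_pos {ρ₀ c : ℝ} (hρ : ρ₀ ∈ Set.Ioo 0 (π / 2))
    (hc : c ∈ Set.Ico (-1) 1) : 0 < sphericalChordRate ρ₀ c := by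
  have hsin : 0 < sin ρ₀ := sin_pos_of_pos_of_lt_pi hρ.1 (by linarith [hρ.2, pi_pos])
  have hcos : 0 < cos ρ₀ := cos_pos_of_mem_Ioo ⟨by linarith [hρ.1, pi_pos], hρ.2⟩
  obtain ⟨hu₁, hu₂⟩ := sin_mul_sin_mul_add_cos_mul_cos_mem_Ioo hρ hc
  have hsqrt : 0 < √(1 - (sin ρ₀ * sin ρ₀ * c + cos ρ₀ * cos ρ₀) ^ 2) :=
    sqrt_pos.2 (by nlinarith)
  have h1c : 0 < 1 - c := by linarith [hc.2]
  unfold sphericalChordRate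
  positivity

theorem hasDerivAt_arccos_sphericalChord {ρ₀ c : ℝ}
    (hu : sin ρ₀ * sin ρ₀ * c + cos ρ₀ * cos ρ₀ ∈ Set.Ioo (-1) 1) (A B : ℝ) :
    HasDerivAt (fun ε : ℝ => arccos (sin (ρ₀ + ε * A) * sin (ρ₀ + ε * B) * c +
        cos (ρ₀ + ε * A) * cos (ρ₀ + ε * B)))
      (sphericalChordRate ρ₀ c * (A + B)) 0 := by
  have hline : ∀ X : ℝ, HasDerivAt (fun ε : ℝ => ρ₀ + ε * X) X 0 := fun X => by
    simpa using ((hasDerivAt_id (0 : ℝ)).mul_const X).const_add ρ₀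
  have hinner := (((hline A).sin.fun_mul (hline B).sin).mul_const c).fun_add
    ((hline A).cos.fun_mul (hline B).cos)
  have harccos := hasDerivAt_arccos hu.1.ne' hu.2.ne
  refine (harccos.comp_of_eq 0 hinner (by simp only [zero_mul, add_zero])).congr_deriv ?_
  simp only [sphericalChordRate, zero_mul, add_zero]
  ring

open Finset in
theorem hasDerivAt_sum_arccos_sphericalChord {ρ₀ c : ℝ}
    (hu : sin ρ₀ * sin ρ₀ * c + cos ρ₀ * cos ρ₀ ∈ Set.Ioo (-1) 1) {n : ℕ} (r : ℕ → ℝ)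
    (hr : r n = r 0) :
    HasDerivAt (fun ε : ℝ => ∑ j ∈ range n,
        arccos (sin (ρ₀ + ε * r j) * sin (ρ₀ + ε * r (j + 1)) * c +
          cos (ρ₀ + ε * r j) * cos (ρ₀ + ε * r (j + 1))))
      (2 * sphericalChordRate ρ₀ c * ∑ j ∈ range n, r j) 0 := by
  refine (HasDerivAt.fun_sum fun j _ =>
    hasDerivAt_arccos_sphericalChord hu (r j) (r (j + 1))).congr_deriv ?_
  rw [← mul_sum, sum_add_distrib, sum_range_succ_eq_of_eq r hr]
  ring

section Fourier

open Complex Finset Function MeasureTheory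

variable {g : ℝ → ℂ} {k : ℤ}

theorem Function.Periodic.mul_exp_neg_I_int_mul (hg : Periodic g (2 * π)) (k : ℤ) :
    Periodic (fun θ : ℝ => g θ * exp (-I * k * θ)) (2 * π) := fun θ => by
  have hexp : -I * k * ((θ + 2 * π : ℝ) : ℂ) = -I * k * θ + ((-k : ℤ) : ℂ) * (2 * π * I) := by
    push_cast
    ring
  simp only [hg θ, hexp, Complex.exp_add, exp_int_mul_two_pi_mul_I, mul_one]

theorem exp_neg_I_mul_eq_exp_mul_exp_neg_I_mul_add (z : ℂ) (θ a : ℝ) :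
    exp (-I * z * θ) = exp (I * z * a) * exp (-I * z * ((θ + a : ℝ) : ℂ)) := by
  rw [← Complex.exp_add]
  congr 1
  push_cast
  ring

theorem fourierCoeff2pi_comp_add (hg : Periodic g (2 * π)) (a : ℝ) (k : ℤ) :
    fourierCoeff2pi (fun θ => g (θ + a)) k = exp (I * k * a) * fourierCoeff2pi g k := by
  have hshift : ∀ θ : ℝ, g (θ + a) * exp (-I * k * θ) =
      exp (I * k * a) * (g (θ + a) * exp (-I * k * ((θ + a : ℝ) : ℂ))) := fun θ => by
    rw [mul_left_comm, ← exp_neg_I_mul_eq_exp_mul_exp_neg_I_mul_add]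
  have hperiod := (hg.mul_exp_neg_I_int_mul k).intervalIntegral_add_eq a 0
  simp only [fourierCoeff2pi, hshift, intervalIntegral.integral_const_mul,
    intervalIntegral.integral_comp_add_right (fun θ : ℝ => g θ * exp (-I * k * θ)) a]
  rw [zero_add, add_comm (2 * π), hperiod, zero_add]
  ring

theorem intervalIntegrable_comp_add_mul_exp (hg : Periodic g (2 * π))
    (hint : IntervalIntegrable (fun θ : ℝ => g θ * exp (-I * k * θ)) volume 0 (2 * π)) (a : ℝ) :
    IntervalIntegrable (fun θ : ℝ => g (θ + a) * exp (-I * k * θ)) volume 0 (2 * π) := by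
  have hall := (hg.mul_exp_neg_I_int_mul k).intervalIntegrable₀ (by positivity)
    (by simpa using hint) a (2 * π + a)
  have := (hall.comp_add_right a).const_mul (exp (I * k * a))
  simp only [add_sub_cancel_right, sub_self] at this
  refine this.congr fun θ _ => ?_
  rw [mul_left_comm, ← exp_neg_I_mul_eq_exp_mul_exp_neg_I_mul_add]

theorem fourierCoeff2pi_const (hk : k ≠ 0) (z : ℂ) : fourierCoeff2pi (fun _ => z) k = 0 := by
  have hc : -I * k ≠ 0 := mul_ne_zero (neg_ne_zero.2 I_ne_zero) (by exact_mod_cast hk)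
  have hperiod : exp (-I * k * ((2 * π : ℝ) : ℂ)) = 1 := by
    rw [show -I * k * ((2 * π : ℝ) : ℂ) = ((-k : ℤ) : ℂ) * (2 * π * I) by push_cast; ring]
    exact exp_int_mul_two_pi_mul_I _
  simp only [fourierCoeff2pi, intervalIntegral.integral_const_mul, integral_exp_mul_complex hc,
    hperiod, ofReal_zero, mul_zero, Complex.exp_zero, sub_self, zero_div]

theorem fourierCoeff2pi_finset_sum {ι : Type*} (s : Finset ι) (f : ι → ℝ → ℂ)
    (hf : ∀ i ∈ s, IntervalIntegrable (fun θ : ℝ => f i θ * exp (-I * k * θ)) volume 0 (2 * π)) :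
    fourierCoeff2pi (fun θ => ∑ i ∈ s, f i θ) k = ∑ i ∈ s, fourierCoeff2pi (f i) k := by
  simp only [fourierCoeff2pi, sum_mul, intervalIntegral.integral_finsetSum hf, mul_sum]

theorem intervalIntegrable_of_fourierCoeff2pi_ne_zero (h : fourierCoeff2pi g k ≠ 0) :
    IntervalIntegrable (fun θ : ℝ => g θ * exp (-I * k * θ)) volume 0 (2 * π) := by
  by_contra hint
  exact h (by rw [fourierCoeff2pi, intervalIntegral.integral_undef hint, mul_zero])

theorem exp_I_mul_two_pi_mul_div_of_dvd {n : ℕ} (hnk : (n : ℤ) ∣ k) (m : ℤ) (j : ℕ) :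
    exp (I * k * ((2 * π * m * j / n : ℝ) : ℂ)) = 1 := by
  obtain ⟨l, rfl⟩ := hnk
  rcases eq_or_ne n 0 with rfl | hn
  · simp
  have hexp : I * ((n * l : ℤ) : ℂ) * ((2 * π * m * j / n : ℝ) : ℂ) =
      ((l * m * j : ℤ) : ℂ) * (2 * π * I) := by
    push_cast
    field_simp
  rw [hexp, exp_int_mul_two_pi_mul_I]

theorem fourierCoeff2pi_sum_comp_add_two_pi_mul_div (hg : Periodic g (2 * π))
    (hint : IntervalIntegrable (fun θ : ℝ => g θ * exp (-I * k * θ)) volume 0 (2 * π))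
    {n : ℕ} (hnk : (n : ℤ) ∣ k) (m : ℤ) :
    fourierCoeff2pi (fun θ => ∑ j ∈ range n, g (θ + 2 * π * m * j / n)) k =
      n * fourierCoeff2pi g k := by
  rw [fourierCoeff2pi_finset_sum _ _ fun j _ => intervalIntegrable_comp_add_mul_exp hg hint _]
  simp only [fourierCoeff2pi_comp_add hg, exp_I_mul_two_pi_mul_div_of_dvd hnk, one_mul, sum_const,
    card_range, nsmul_eq_mul]

end Fourier

open Finset in
theorem deriv_sum_arccos_sphericalChord_eq {ρ₀ : ℝ} (hρ : ρ₀ ∈ Set.Ioo 0 (π / 2)) {n : ℕ} {m : ℤ}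
    (hm : 0 < m) (hmn : m < n) {ρ₁ : ℝ → ℝ} (hper : Function.Periodic ρ₁ (2 * π)) (θ : ℝ) :
    deriv (fun ε : ℝ => ∑ j ∈ range n,
        arccos (sin (ρ₀ + ε * ρ₁ (θ + 2 * π * m * j / n)) *
            sin (ρ₀ + ε * ρ₁ (θ + 2 * π * m * (j + 1) / n)) * cos (2 * π * m / n) +
          cos (ρ₀ + ε * ρ₁ (θ + 2 * π * m * j / n)) *
            cos (ρ₀ + ε * ρ₁ (θ + 2 * π * m * (j + 1) / n)))) 0 =
      2 * sphericalChordRate ρ₀ (cos (2 * π * m / n)) *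
        ∑ j ∈ range n, ρ₁ (θ + 2 * π * m * j / n) := by
  have hu := sin_mul_sin_mul_add_cos_mul_cos_mem_Ioo hρ
    ⟨neg_one_le_cos _, cos_two_pi_mul_div_lt_one hm hmn⟩
  have hclosed : ρ₁ (θ + 2 * π * m * (n : ℕ) / n) = ρ₁ (θ + 2 * π * m * (0 : ℕ) / n) := by
    have hn : (n : ℝ) ≠ 0 := by exact_mod_cast (hm.trans hmn).ne'
    rw [Nat.cast_zero, mul_zero, zero_div, add_zero, mul_div_assoc, div_self hn, mul_one,
      mul_comm, hper.int_mul m θ]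
  have hderiv := hasDerivAt_sum_arccos_sphericalChord hu
    (fun j : ℕ => ρ₁ (θ + 2 * π * m * j / n)) hclosed
  push_cast at hderiv
  exact hderiv.deriv

theorem spherical_melnikov_not_constant_general (ρ₀ : ℝ) (hρ : ρ₀ ∈ Set.Ioo 0 (π / 2))
    (n : ℕ) (m : ℤ) (hm : 0 < m) (hmn : m < (n : ℤ))
    (ρ₁ : ℝ → ℝ) (hper : Function.Periodic ρ₁ (2 * π))
    (M : ℝ → ℝ)
    (hM : ∀ θ : ℝ, M θ =
      deriv (fun ε : ℝ => ∑ j ∈ Finset.range n,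
        arccos (sin (ρ₀ + ε * ρ₁ (θ + 2 * π * m * j / n)) *
            sin (ρ₀ + ε * ρ₁ (θ + 2 * π * m * (j + 1) / n)) * cos (2 * π * m / n) +
          cos (ρ₀ + ε * ρ₁ (θ + 2 * π * m * j / n)) *
            cos (ρ₀ + ε * ρ₁ (θ + 2 * π * m * (j + 1) / n)))) 0)
    (h : ∃ k : ℤ, k ≠ 0 ∧ (n : ℤ) ∣ k ∧
      fourierCoeff2pi (fun θ => ((ρ₁ θ : ℝ) : ℂ)) k ≠ 0) :
    ¬ ∃ c : ℝ, ∀ θ : ℝ, M θ = c := by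
  rintro ⟨c, hc⟩
  obtain ⟨k, hk, hnk, hcoeff⟩ := h
  have hrate := sphericalChordRate_pos hρ ⟨neg_one_le_cos _, cos_two_pi_mul_div_lt_one hm hmn⟩
  have hsum : ∀ θ, ∑ j ∈ Finset.range n, ρ₁ (θ + 2 * π * m * j / n) =
      c / (2 * sphericalChordRate ρ₀ (cos (2 * π * m / n))) := fun θ => by
    rw [eq_div_iff (by positivity), ← hc θ, hM θ, deriv_sum_arccos_sphericalChord_eq hρ hm hmn hper]
    ring
  have hperC : Function.Periodic (fun θ => ((ρ₁ θ : ℝ) : ℂ)) (2 * π) := fun θ => by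
    simp only [hper θ]
  have hcoeff_sum := fourierCoeff2pi_sum_comp_add_two_pi_mul_div hperC
    (intervalIntegrable_of_fourierCoeff2pi_ne_zero hcoeff) hnk m
  simp only [← Complex.ofReal_sum, hsum, fourierCoeff2pi_const hk] at hcoeff_sum
  have hn : n ≠ 0 := by
    rintro rfl
    exact hk (by simpa using hnk)
  exact hcoeff ((mul_eq_zero.1 hcoeff_sum.symm).resolve_left (Nat.cast_ne_zero.2 hn))

/-- **Break-up criterion on the sphere.** For `ρ₀ ∈ (0, π/2)`, integers `0 < m < n`,
`n ≥ 2`, `gcd(m,n) = 1`, and a continuous `2π`-periodic `ρ₁ : ℝ → ℝ`, let `M(θ)` be the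
derivative at `ε = 0` of the total spherical length of the `(m,n)`-polygon inscribed in the
perturbed geodesic circle `ρ₀ + ερ₁` with impact angles `θ_j = θ + 2πmj/n`. If `ρ₁` has a
nonzero Fourier coefficient at some nonzero frequency `k` divisible by `n`, then `M` is not
constant. -/
theorem spherical_melnikov_not_constant (ρ₀ : ℝ) (hρ : ρ₀ ∈ Set.Ioo 0 (π / 2))
    (n : ℕ) (hn : 2 ≤ n) (m : ℤ) (hm : 0 < m) (hmn : m < (n : ℤ))
    (hgcd : Int.gcd m (n : ℤ) = 1)
    (ρ₁ : ℝ → ℝ) (hc : Continuous ρ₁) (hper : Function.Periodic ρ₁ (2 * π))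
    (M : ℝ → ℝ)
    (hM : ∀ θ : ℝ, M θ =
      deriv (fun ε : ℝ => ∑ j ∈ Finset.range n,
        arccos (sin (ρ₀ + ε * ρ₁ (θ + 2 * π * m * j / n)) *
            sin (ρ₀ + ε * ρ₁ (θ + 2 * π * m * (j + 1) / n)) * cos (2 * π * m / n) +
          cos (ρ₀ + ε * ρ₁ (θ + 2 * π * m * j / n)) *
            cos (ρ₀ + ε * ρ₁ (θ + 2 * π * m * (j + 1) / n)))) 0)
    (h : ∃ k : ℤ, k ≠ 0 ∧ (n : ℤ) ∣ k ∧
      fourierCoeff2pi (fun θ => ((ρ₁ θ : ℝ) : ℂ)) k ≠ 0) :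
    ¬ ∃ c : ℝ, ∀ θ : ℝ, M θ = c :=
  spherical_melnikov_not_constant_general ρ₀ hρ n m hm hmn ρ₁ hper M hM h
end

section
/- Let ρ₀ > 0. For ψ ∈ (0, π/2), the quantity (cosh²ρ₀ − tan²ψ)/(sec²ψ + sinh²ρ₀) equals (cosh²ρ₀ − tan²ψ)/(cosh²ρ₀ + tan²ψ) and lies in the open interval (−1, 1); the function α(ψ) = arccos( (cosh²ρ₀ − tan²ψ)/(sec²ψ + sinh²ρ₀) ) is strictly increasing on (0, π/2) and maps (0, π/2) bijectively onto (0, π). In particular, for all integers 0 < m < n with 2m < n there exists a unique ψ^{m/n} ∈ (0, π/2) with α(ψ^{m/n}) = 2πm/n. -/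
/-!
Since `1 / cos² ψ = 1 + tan² ψ` and `cosh² ρ₀ = 1 + sinh² ρ₀`, the argument of `arccos` is
`(k² − tan² ψ)/(k² + tan² ψ)` with `k = cosh ρ₀`, and by the half-angle formula
`cos 2θ = (1 − tan² θ)/(1 + tan² θ)` this is `cos (2 arctan (tan ψ / k))`. Hence
`α ψ = 2 arctan (tan ψ / k)` on `(0, π/2)`, a composition of increasing bijections
`(0, π/2) → (0, ∞) → (0, π/2) → (0, π)`.
-/

open Real Set

lemma Set.BijOn.existsUnique {α β : Type*} {f : α → β} {s : Set α} {t : Set β}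
    (h : BijOn f s t) {y : β} (hy : y ∈ t) : ∃! x, x ∈ s ∧ f x = y := by
  obtain ⟨x, hx, rfl⟩ := h.surjOn hy
  exact ⟨x, ⟨hx, rfl⟩, fun x' ⟨hx', he⟩ => h.injOn hx' hx he⟩

namespace Real

lemma one_div_cos_sq_add_sinh_sq {ψ : ℝ} (hψ : cos ψ ≠ 0) (ρ : ℝ) :
    1 / cos ψ ^ 2 + sinh ρ ^ 2 = cosh ρ ^ 2 + tan ψ ^ 2 := by
  rw [one_div, ← inv_one_add_tan_sq hψ, inv_inv, cosh_sq]
  ring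

lemma sub_div_add_mem_Ioo {c t : ℝ} (hc : 0 < c) (ht : 0 < t) :
    (c - t) / (c + t) ∈ Ioo (-1 : ℝ) 1 := by
  have hct : 0 < c + t := by linarith
  constructor
  · rw [lt_div_iff₀ hct]; linarith
  · rw [div_lt_one hct]; linarith

lemma cos_two_mul_arctan (x : ℝ) : cos (2 * arctan x) = (1 - x ^ 2) / (1 + x ^ 2) := by
  have hx : 1 + x ^ 2 ≠ 0 := by positivity
  rw [cos_two_mul, cos_sq_arctan]
  field_simp
  ring

lemma arccos_sq_sub_div_sq_add {k x : ℝ} (hk : 0 < k) (hx : 0 ≤ x) :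
    arccos ((k ^ 2 - x ^ 2) / (k ^ 2 + x ^ 2)) = 2 * arctan (x / k) := by
  have hquot : (k ^ 2 - x ^ 2) / (k ^ 2 + x ^ 2) = (1 - (x / k) ^ 2) / (1 + (x / k) ^ 2) := by
    field_simp
  have h0 : 0 ≤ arctan (x / k) := arctan_nonneg.2 (div_nonneg hx hk.le)
  rw [hquot, ← cos_two_mul_arctan, arccos_cos (by linarith)
    (by linarith [arctan_lt_pi_div_two (x / k)])]

lemma strictMonoOn_two_mul_arctan_tan_div {k : ℝ} (hk : 0 < k) :
    StrictMonoOn (fun ψ => 2 * arctan (tan ψ / k)) (Ioo (-(π / 2)) (π / 2)) :=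
  fun _ hx _ hy hxy =>
    mul_lt_mul_of_pos_left (arctan_strictMono (div_lt_div_of_pos_right
      (strictMonoOn_tan hx hy hxy) hk)) two_pos

lemma bijOn_two_mul_arctan_tan_div {k : ℝ} (hk : 0 < k) :
    BijOn (fun ψ => 2 * arctan (tan ψ / k)) (Ioo 0 (π / 2)) (Ioo 0 π) := by
  have hsub : Ioo 0 (π / 2) ⊆ Ioo (-(π / 2)) (π / 2) :=
    Ioo_subset_Ioo_left (by linarith [pi_pos])
  refine ⟨fun ψ hψ => ?_, (strictMonoOn_two_mul_arctan_tan_div hk).injOn.mono hsub,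
    fun y hy => ?_⟩
  · have htan : 0 < tan ψ / k := div_pos (tan_pos_of_pos_of_lt_pi_div_two hψ.1 hψ.2) hk
    exact ⟨by linarith [arctan_pos.2 htan], by linarith [arctan_lt_pi_div_two (tan ψ / k)]⟩
  · refine ⟨arctan (k * tan (y / 2)), ⟨?_, arctan_lt_pi_div_two _⟩, ?_⟩
    · exact arctan_pos.2 (mul_pos hk (tan_pos_of_pos_of_lt_pi_div_two (by linarith [hy.1])
        (by linarith [hy.2])))
    · dsimp only
      rw [tan_arctan, mul_div_cancel_left₀ _ hk.ne', arctan_tan (by linarith [hy.1, pi_pos])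
        (by linarith [hy.2])]
      ring

end Real

lemma two_mul_pi_mul_div_mem_Ioo {m n : ℤ} (hm : 0 < m) (h2mn : 2 * m < n) :
    2 * π * m / n ∈ Ioo 0 π := by
  have hm' : (0 : ℝ) < m := by exact_mod_cast hm
  have h2mn' : (2 * m : ℝ) < n := by exact_mod_cast h2mn
  have hn : (0 : ℝ) < n := by linarith
  refine ⟨by positivity, ?_⟩
  rw [div_lt_iff₀ hn]
  nlinarith [pi_pos]

theorem hyperbolic_twist_general (ρ₀ : ℝ)
    (α : ℝ → ℝ)
    (hα : ∀ ψ : ℝ, α ψ =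
      arccos ((cosh ρ₀ ^ 2 - tan ψ ^ 2) / (1 / cos ψ ^ 2 + sinh ρ₀ ^ 2))) :
    (∀ ψ ∈ Set.Ioo 0 (π / 2),
      (cosh ρ₀ ^ 2 - tan ψ ^ 2) / (1 / cos ψ ^ 2 + sinh ρ₀ ^ 2) =
        (cosh ρ₀ ^ 2 - tan ψ ^ 2) / (cosh ρ₀ ^ 2 + tan ψ ^ 2) ∧
      (cosh ρ₀ ^ 2 - tan ψ ^ 2) / (1 / cos ψ ^ 2 + sinh ρ₀ ^ 2) ∈ Set.Ioo (-1 : ℝ) 1) ∧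
    StrictMonoOn α (Set.Ioo 0 (π / 2)) ∧
    Set.BijOn α (Set.Ioo 0 (π / 2)) (Set.Ioo 0 π) ∧
    ∀ m n : ℤ, 0 < m → m < n → 2 * m < n →
      ∃! ψ : ℝ, ψ ∈ Set.Ioo 0 (π / 2) ∧ α ψ = 2 * π * m / n := by
  have hden : ∀ ψ ∈ Ioo 0 (π / 2), 1 / cos ψ ^ 2 + sinh ρ₀ ^ 2 = cosh ρ₀ ^ 2 + tan ψ ^ 2 :=
    fun ψ hψ => one_div_cos_sq_add_sinh_sq
      (cos_pos_of_mem_Ioo ⟨by linarith [hψ.1, pi_pos], hψ.2⟩).ne' ρ₀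
  have hαeq : EqOn α (fun ψ => 2 * arctan (tan ψ / cosh ρ₀)) (Ioo 0 (π / 2)) := fun ψ hψ => by
    rw [hα, hden ψ hψ, arccos_sq_sub_div_sq_add (cosh_pos ρ₀)
      (tan_pos_of_pos_of_lt_pi_div_two hψ.1 hψ.2).le]
  have hbij : BijOn α (Ioo 0 (π / 2)) (Ioo 0 π) :=
    (bijOn_two_mul_arctan_tan_div (cosh_pos ρ₀)).congr hαeq.symm
  refine ⟨fun ψ hψ => ?_, ?_, hbij, fun m n hm _ h2mn => ?_⟩
  · rw [hden ψ hψ]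
    exact ⟨rfl, sub_div_add_mem_Ioo (by positivity)
      (pow_pos (tan_pos_of_pos_of_lt_pi_div_two hψ.1 hψ.2) 2)⟩
  · exact ((strictMonoOn_two_mul_arctan_tan_div (cosh_pos ρ₀)).mono
      (Ioo_subset_Ioo_left (by linarith [pi_pos]))).congr hαeq.symm
  · exact hbij.existsUnique (two_mul_pi_mul_div_mem_Ioo hm h2mn)

/-- **Twist property of the hyperbolic circular billiard.** For `ρ₀ > 0` and
`ψ ∈ (0, π/2)`: `(cosh²ρ₀ − tan²ψ)/(sec²ψ + sinh²ρ₀) = (cosh²ρ₀ − tan²ψ)/(cosh²ρ₀ + tan²ψ)`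
lies in `(−1, 1)`; the polar-angle advance
`α(ψ) = arccos((cosh²ρ₀ − tan²ψ)/(sec²ψ + sinh²ρ₀))` is strictly increasing on `(0, π/2)`
and maps it bijectively onto `(0, π)`; and for all integers `0 < m < n` with `2m < n` there
is a unique `ψ^{m/n} ∈ (0, π/2)` with `α(ψ^{m/n}) = 2πm/n`. -/
theorem hyperbolic_twist (ρ₀ : ℝ) (hρ : 0 < ρ₀)
    (α : ℝ → ℝ)
    (hα : ∀ ψ : ℝ, α ψ =
      arccos ((cosh ρ₀ ^ 2 - tan ψ ^ 2) / (1 / cos ψ ^ 2 + sinh ρ₀ ^ 2))) :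
    (∀ ψ ∈ Set.Ioo 0 (π / 2),
      (cosh ρ₀ ^ 2 - tan ψ ^ 2) / (1 / cos ψ ^ 2 + sinh ρ₀ ^ 2) =
        (cosh ρ₀ ^ 2 - tan ψ ^ 2) / (cosh ρ₀ ^ 2 + tan ψ ^ 2) ∧
      (cosh ρ₀ ^ 2 - tan ψ ^ 2) / (1 / cos ψ ^ 2 + sinh ρ₀ ^ 2) ∈ Set.Ioo (-1 : ℝ) 1) ∧
    StrictMonoOn α (Set.Ioo 0 (π / 2)) ∧
    Set.BijOn α (Set.Ioo 0 (π / 2)) (Set.Ioo 0 π) ∧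
    ∀ m n : ℤ, 0 < m → m < n → 2 * m < n →
      ∃! ψ : ℝ, ψ ∈ Set.Ioo 0 (π / 2) ∧ α ψ = 2 * π * m / n :=
  hyperbolic_twist_general ρ₀ α hα
end
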